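/- For every integer n ≥ 3, the graphical zonotope Z(C_n) ⊆ ℝ^n of the cycle on n vertices coincides, up to an affine bijective transformation, with the Minkowski sum [0,1]^{n−1} + conv{0,(1,…,1)} ⊆ ℝ^{n−1} of the (n−1)-dimensional unit hypercube with one of its main diagonals: there exists an affine map T : ℝ^{n−1} → ℝ^n that is injective on [0,1]^{n−1} + conv{0,(1,…,1)} and maps it onto Z(C_n). -/
import Mathlib

open Set Pointwise

noncomputable section

/-- The cyclic successor on `Fin n`. -/
def cycNext {n : ℕ} (i : Fin n) : Fin n :=
  if h : i.val + 1 < n then ⟨i.val + 1, h⟩ else ⟨0, i.pos⟩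

/-- The graphical zonotope of the cycle on `n` vertices: the Minkowski sum of the
segments `conv{e_i, e_{i+1}}` for `1 ≤ i ≤ n-1` together with `conv{e_n, e_1}`. -/
noncomputable def cycleZonotope (n : ℕ) : Set (Fin n → ℝ) :=
  ∑ i : Fin n, segment ℝ (Pi.single i (1 : ℝ)) (Pi.single (cycNext i) (1 : ℝ))

/-- The Minkowski sum of the unit hypercube `[0,1]^m` with its main diagonal
`conv{0,(1,…,1)}`. -/
noncomputable def cubePlusDiagonal (m : ℕ) : Set (Fin m → ℝ) :=
  {x : Fin m → ℝ | ∀ i, 0 ≤ x i ∧ x i ≤ 1} +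
    segment ℝ (0 : Fin m → ℝ) (fun _ => (1 : ℝ))

/-- cyclic predecessor -/
def cycPrev {n : ℕ} [NeZero n] (k : Fin n) : Fin n :=
  if _ : k.val = 0 then ⟨n - 1, by have := NeZero.pos n; omega⟩
  else ⟨k.val - 1, by omega⟩

lemma cycPrev_val_of_eq_zero {n : ℕ} [NeZero n] (k : Fin n) (h : k.val = 0) :
    (cycPrev k).val = n - 1 := by
  unfold cycPrev; rw [dif_pos h]

lemma cycPrev_val_of_ne_zero {n : ℕ} [NeZero n] (k : Fin n) (h : k.val ≠ 0) :
    (cycPrev k).val = k.val - 1 := by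
  unfold cycPrev; rw [dif_neg h]

lemma cycNext_cycPrev {n : ℕ} [NeZero n] (k : Fin n) : cycNext (cycPrev k) = k := by
  have hn := NeZero.pos n
  have hk := k.isLt
  rcases eq_or_ne k.val 0 with h0 | h0
  · have h : cycPrev k = ⟨n - 1, by omega⟩ := Fin.ext (cycPrev_val_of_eq_zero k h0)
    rw [h]; unfold cycNext
    rw [dif_neg (by simp; omega)]
    ext; simp; omega
  · have h : cycPrev k = ⟨k.val - 1, by omega⟩ := Fin.ext (cycPrev_val_of_ne_zero k h0)
    rw [h]; unfold cycNext
    rw [dif_pos (by simp; omega)]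
    ext; simp; omega

lemma cycNext_inj {n : ℕ} : Function.Injective (cycNext (n := n)) := by
  intro i j h
  have hi := i.isLt
  have hj := j.isLt
  unfold cycNext at h
  split_ifs at h <;> (apply Fin.ext; have := Fin.mk.injEq .. ▸ h; simp_all <;> omega)

/-- the linear part -/
def Lmap (m : ℕ) : (Fin m → ℝ) →ₗ[ℝ] (Fin (m + 1) → ℝ) where
  toFun x := fun k =>
    (if h : k.val = 0 then 0 else if h2 : k.val - 1 < m then x ⟨k.val - 1, h2⟩ else 0)
      - (if h : k.val < m then x ⟨k.val, h⟩ else 0)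
  map_add' x y := by funext k; simp only [Pi.add_apply]; split_ifs <;> ring
  map_smul' c x := by funext k; simp only [Pi.smul_apply, RingHom.id_apply, smul_eq_mul]
                      split_ifs <;> ring

/-- the constant part -/
def cvec (m : ℕ) : Fin (m + 1) → ℝ :=
  fun k => if k.val = 0 then 2 else if k.val = m then 0 else 1

/-- the affine map -/
def Tmap (m : ℕ) : (Fin m → ℝ) →ᵃ[ℝ] (Fin (m + 1) → ℝ) :=
  (Lmap m).toAffineMap + AffineMap.const ℝ (Fin m → ℝ) (cvec m)

lemma Tmap_apply (m : ℕ) (x : Fin m → ℝ) (k : Fin (m + 1)) :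
    Tmap m x k =
      (if h : k.val = 0 then 0 else if h2 : k.val - 1 < m then x ⟨k.val - 1, h2⟩ else 0)
        - (if h : k.val < m then x ⟨k.val, h⟩ else 0)
        + (if k.val = 0 then 2 else if k.val = m then 0 else 1) := by
  rfl

lemma Tmap_inj (m : ℕ) : Function.Injective (Tmap m) := by
  intro x y h
  have key : ∀ j : ℕ, ∀ hj : j < m, x ⟨j, hj⟩ = y ⟨j, hj⟩ := by
    intro j
    induction j with
    | zero =>
      intro hj
      have h0 := congrFun h (⟨0, by omega⟩ : Fin (m + 1))
      rw [Tmap_apply, Tmap_apply] at h0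
      simp only [dif_pos rfl] at h0
      rw [dif_pos hj, dif_pos hj] at h0
      simp at h0
      linarith
    | succ j ih =>
      intro hj
      have h0 := congrFun h (⟨j + 1, by omega⟩ : Fin (m + 1))
      rw [Tmap_apply, Tmap_apply] at h0
      have hne : ¬ (j + 1 = 0) := by omega
      rw [dif_neg hne, dif_neg hne] at h0
      simp only [Nat.add_sub_cancel] at h0
      rw [dif_pos (by omega : j < m), dif_pos (by omega : j < m)] at h0
      rw [dif_pos hj, dif_pos hj] at h0
      have hih := ih (by omega)
      simp only [if_neg hne] at h0
      split_ifs at h0 <;> linarith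
  funext i
  have := key i.val i.isLt
  simpa using this

lemma sum_segment_point (m : ℕ) (t : Fin (m + 1) → ℝ) :
    (∑ i : Fin (m + 1),
        ((1 - t i) • (Pi.single i 1 : Fin (m + 1) → ℝ)
          + t i • (Pi.single (cycNext i) 1 : Fin (m + 1) → ℝ)))
      = fun k => 1 - t k + t (cycPrev k) := by
  funext k
  rw [Finset.sum_apply]
  simp only [Pi.add_apply, Pi.smul_apply, smul_eq_mul]
  rw [Finset.sum_add_distrib]
  congr 1
  · have e : ∀ i : Fin (m+1), (1 - t i) * (Pi.single i 1 : Fin (m+1) → ℝ) k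
        = if i = k then 1 - t i else 0 := by
      intro i
      rw [Pi.single_apply]
      split_ifs with h1 h2 h2
      · rw [mul_one]
      · exact absurd h1.symm h2
      · exact absurd h2.symm h1
      · rw [mul_zero]
    rw [Finset.sum_congr rfl (fun i _ => e i), Finset.sum_ite_eq' (Finset.univ) k]
    simp
  · have e : ∀ i : Fin (m+1), t i * (Pi.single (cycNext i) 1 : Fin (m+1) → ℝ) k
        = if i = cycPrev k then t i else 0 := by
      intro i
      rw [Pi.single_apply]
      have hiff : k = cycNext i ↔ i = cycPrev k := by
        constructor
        · intro h; exact cycNext_inj (by rw [← h, cycNext_cycPrev])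
        · intro h; rw [h, cycNext_cycPrev]
      split_ifs with h1 h2 h2
      · rw [mul_one]
      · exact absurd (hiff.1 h1) h2
      · exact absurd (hiff.2 h2) h1
      · rw [mul_zero]
    rw [Finset.sum_congr rfl (fun i _ => e i), Finset.sum_ite_eq' (Finset.univ) (cycPrev k)]
    simp

/-- evaluation of T on cube + s-diagonal points -/
lemma Tmap_eval (m : ℕ) (hm : 2 ≤ m) (y : Fin m → ℝ) (s : ℝ)
    (t : Fin (m + 1) → ℝ)
    (htc : ∀ k : Fin (m + 1), ∀ h : k.val < m, t k = y ⟨k.val, h⟩)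
    (htm : ∀ k : Fin (m + 1), k.val = m → t k = 1 - s) :
    Tmap m (fun j => y j + s) = fun k => 1 - t k + t (cycPrev k) := by
  funext k
  rw [Tmap_apply]
  have hk := k.isLt
  rcases eq_or_ne k.val 0 with h0 | h0
  · have hcp : (cycPrev k).val = m := (cycPrev_val_of_eq_zero k h0).trans (by omega)
    rw [htc k (by omega), htm _ hcp, dif_pos h0, dif_pos (show k.val < m by omega),
      if_pos h0]
    ring
  · have hcp : (cycPrev k).val = k.val - 1 := cycPrev_val_of_ne_zero k h0
    have hcpm : (cycPrev k).val < m := by omega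
    rw [htc _ hcpm, dif_neg h0, dif_pos (show k.val - 1 < m by omega), if_neg h0]
    have hidx : (⟨(cycPrev k).val, hcpm⟩ : Fin m) = ⟨k.val - 1, by omega⟩ := Fin.ext hcp
    rw [hidx]
    rcases eq_or_ne k.val m with hm' | hm'
    · rw [htm k hm', dif_neg (show ¬ (k.val < m) by omega), if_pos hm']
      ring
    · rw [htc k (by omega), dif_pos (show k.val < m by omega), if_neg hm']
      ring

theorem cycleZonotope_eq_cubePlusDiagonal (n : ℕ) (hn : 3 ≤ n) :
    ∃ T : (Fin (n - 1) → ℝ) →ᵃ[ℝ] (Fin n → ℝ),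
      Set.InjOn T (cubePlusDiagonal (n - 1)) ∧
      T '' cubePlusDiagonal (n - 1) = cycleZonotope n := by
  obtain ⟨m, rfl⟩ : ∃ m, n = m + 1 := ⟨n - 1, by omega⟩
  have hm : 2 ≤ m := by omega
  refine ⟨Tmap m, fun a _ b _ h => Tmap_inj m h, ?_⟩
  show Tmap m '' cubePlusDiagonal m = cycleZonotope (m + 1)
  ext z
  constructor
  · rintro ⟨x, hx, rfl⟩
    obtain ⟨y, hy, w, hw, rfl⟩ := hx
    rw [segment_eq_image] at hw
    obtain ⟨s, hs, rfl⟩ := hw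
    simp only [mem_Icc] at hs
    have hx' : y + ((1 - s) • (0 : Fin m → ℝ) + s • fun _ => (1:ℝ)) = fun j => y j + s := by
      funext j; simp
    beta_reduce
    rw [hx']
    set t : Fin (m + 1) → ℝ :=
      fun k => if h : k.val < m then y ⟨k.val, h⟩ else 1 - s with ht
    rw [Tmap_eval m hm y s t
      (fun k h => by rw [ht]; exact dif_pos h)
      (fun k h => by rw [ht]; exact dif_neg (by omega))]
    rw [cycleZonotope, Set.mem_fintype_sum]
    refine ⟨fun i => (1 - t i) • (Pi.single i 1 : Fin (m+1) → ℝ)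
        + t i • (Pi.single (cycNext i) 1 : Fin (m+1) → ℝ),
      fun i => ?_, ?_⟩
    · rw [segment_eq_image]
      refine ⟨t i, ?_, rfl⟩
      rw [ht]
      simp only [mem_Icc]
      split_ifs with h
      · exact hy _
      · constructor <;> linarith [hs.1, hs.2]
    · rw [sum_segment_point]
  · intro hz
    rw [cycleZonotope, Set.mem_fintype_sum] at hz
    obtain ⟨g, hg, hsum⟩ := hz
    have hseg : ∀ i, ∃ u ∈ Icc (0:ℝ) 1,
        g i = (1 - u) • (Pi.single i 1 : Fin (m+1) → ℝ)
          + u • (Pi.single (cycNext i) 1 : Fin (m+1) → ℝ) := by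
      intro i
      have := hg i
      rw [segment_eq_image] at this
      obtain ⟨u, hu, hgu⟩ := this
      exact ⟨u, hu, hgu.symm⟩
    choose t ht hgt using hseg
    set y : Fin m → ℝ := fun j => t ⟨j.val, by omega⟩ with hy
    set s : ℝ := 1 - t ⟨m, by omega⟩ with hs
    have hmem : (fun j => y j + s) ∈ cubePlusDiagonal m := by
      refine ⟨y, fun i => ?_, s • fun _ => (1:ℝ), ?_, ?_⟩
      · exact ⟨(ht _).1, (ht _).2⟩
      · rw [segment_eq_image]
        refine ⟨s, ?_, by funext j; simp⟩
        have h1 := (ht ⟨m, by omega⟩).1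
        have h2 := (ht ⟨m, by omega⟩).2
        simp only [mem_Icc, hs]
        constructor <;> linarith
      · funext j; simp
    refine ⟨fun j => y j + s, hmem, ?_⟩
    have htc : ∀ k : Fin (m + 1), ∀ h : k.val < m, t k = y ⟨k.val, h⟩ := by
      intro k h
      have hkk : (⟨(⟨k.val, h⟩ : Fin m).val, by omega⟩ : Fin (m+1)) = k := by ext; simp
      rw [hy]
    have htm : ∀ k : Fin (m + 1), k.val = m → t k = 1 - s := by
      intro k h
      have : k = ⟨m, by omega⟩ := Fin.ext h
      rw [this, hs]; ring
    rw [Tmap_eval m hm y s t htc htm, ← hsum, ← sum_segment_point m t]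
    exact (Finset.sum_congr rfl fun i _ => (hgt i).symm)

end
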